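/- arXiv:1001.0863 — 9 statements merged into one kernel-verified Lean document; each statement's English description precedes it below -/
import Mathlib

section
/- For any real s₁, s₂, if x₁ = s₁ − l₁s₂ − q₁s₁s₂ and x₂ = s₂ − l₂s₁ − q₂s₁s₂, then s₁ is a root of the quadratic a₁t² + b₁t + c₁ = 0, where a₁ = q₂ + l₂q₁, b₁ = q₁x₂ − q₂x₁ + l₁l₂ − 1, and c₁ = x₁ + l₁x₂. -/
/-- `s₁` is a root of the quadratic `a₁t² + b₁t + c₁ = 0` with
`a₁ = q₂ + l₂q₁`, `b₁ = q₁x₂ − q₂x₁ + l₁l₂ − 1`, `c₁ = x₁ + l₁x₂`. -/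
theorem stmt_1 (l₁ l₂ q₁ q₂ s₁ s₂ x₁ x₂ : ℝ)
    (hx₁ : x₁ = s₁ - l₁ * s₂ - q₁ * s₁ * s₂)
    (hx₂ : x₂ = s₂ - l₂ * s₁ - q₂ * s₁ * s₂)
    (a₁ b₁ c₁ : ℝ)
    (ha₁ : a₁ = q₂ + l₂ * q₁)
    (hb₁ : b₁ = q₁ * x₂ - q₂ * x₁ + l₁ * l₂ - 1)
    (hc₁ : c₁ = x₁ + l₁ * x₂) :
    a₁ * s₁ ^ 2 + b₁ * s₁ + c₁ = 0 := by
  subst ha₁ hb₁ hc₁ hx₁ hx₂; ring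
end

section
/- For any real s₁, s₂, if x₁ = s₁ − l₁s₂ − q₁s₁s₂ and x₂ = s₂ − l₂s₁ − q₂s₁s₂, then s₂ is a root of the quadratic a₂t² + b₂t + c₂ = 0, where a₂ = q₁ + l₁q₂, b₂ = q₂x₁ − q₁x₂ + l₁l₂ − 1, and c₂ = x₂ + l₂x₁. -/
/-- `s₂` is a root of the quadratic `a₂t² + b₂t + c₂ = 0` with
`a₂ = q₁ + l₁q₂`, `b₂ = q₂x₁ − q₁x₂ + l₁l₂ − 1`, `c₂ = x₂ + l₂x₁`. -/
theorem stmt_2 (l₁ l₂ q₁ q₂ s₁ s₂ x₁ x₂ : ℝ)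
    (hx₁ : x₁ = s₁ - l₁ * s₂ - q₁ * s₁ * s₂)
    (hx₂ : x₂ = s₂ - l₂ * s₁ - q₂ * s₁ * s₂)
    (a₂ b₂ c₂ : ℝ)
    (ha₂ : a₂ = q₁ + l₁ * q₂)
    (hb₂ : b₂ = q₂ * x₁ - q₁ * x₂ + l₁ * l₂ - 1)
    (hc₂ : c₂ = x₂ + l₂ * x₁) :
    a₂ * s₂ ^ 2 + b₂ * s₂ + c₂ = 0 := by
  subst hx₁ hx₂ ha₂ hb₂ hc₂; ring
end

section
/- For any real s₁, s₂, if x₁ = s₁ − l₁s₂ − q₁s₁s₂ and x₂ = s₂ − l₂s₁ − q₂s₁s₂, then the discriminant Δ₁ = b₁² − 4a₁c₁ equals J², where a₁ = q₂ + l₂q₁, b₁ = q₁x₂ − q₂x₁ + l₁l₂ − 1, c₁ = x₁ + l₁x₂, and J = 1 − l₁l₂ − (q₂ + l₂q₁)s₁ − (q₁ + l₁q₂)s₂. -/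
/-- The discriminant `Δ₁ = b₁² − 4a₁c₁` equals `J²`. -/
theorem stmt_3 (l₁ l₂ q₁ q₂ s₁ s₂ x₁ x₂ : ℝ)
    (hx₁ : x₁ = s₁ - l₁ * s₂ - q₁ * s₁ * s₂)
    (hx₂ : x₂ = s₂ - l₂ * s₁ - q₂ * s₁ * s₂)
    (a₁ b₁ c₁ J : ℝ)
    (ha₁ : a₁ = q₂ + l₂ * q₁)
    (hb₁ : b₁ = q₁ * x₂ - q₂ * x₁ + l₁ * l₂ - 1)
    (hc₁ : c₁ = x₁ + l₁ * x₂)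
    (hJ : J = 1 - l₁ * l₂ - (q₂ + l₂ * q₁) * s₁ - (q₁ + l₁ * q₂) * s₂) :
    b₁ ^ 2 - 4 * a₁ * c₁ = J ^ 2 := by
  subst hx₁ hx₂ ha₁ hb₁ hc₁ hJ; ring
end

section
/- For any real s₁, s₂, if x₁ = s₁ − l₁s₂ − q₁s₁s₂ and x₂ = s₂ − l₂s₁ − q₂s₁s₂, then the discriminant Δ₂ = b₂² − 4a₂c₂ equals J², where a₂ = q₁ + l₁q₂, b₂ = q₂x₁ − q₁x₂ + l₁l₂ − 1, c₂ = x₂ + l₂x₁, and J = 1 − l₁l₂ − (q₂ + l₂q₁)s₁ − (q₁ + l₁q₂)s₂. -/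
/-- The discriminant `Δ₂ = b₂² − 4a₂c₂` equals `J²`. -/
theorem stmt_4 (l₁ l₂ q₁ q₂ s₁ s₂ x₁ x₂ : ℝ)
    (hx₁ : x₁ = s₁ - l₁ * s₂ - q₁ * s₁ * s₂)
    (hx₂ : x₂ = s₂ - l₂ * s₁ - q₂ * s₁ * s₂)
    (a₂ b₂ c₂ J : ℝ)
    (ha₂ : a₂ = q₁ + l₁ * q₂)
    (hb₂ : b₂ = q₂ * x₁ - q₁ * x₂ + l₁ * l₂ - 1)
    (hc₂ : c₂ = x₂ + l₂ * x₁)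
    (hJ : J = 1 - l₁ * l₂ - (q₂ + l₂ * q₁) * s₁ - (q₁ + l₁ * q₂) * s₂) :
    b₂ ^ 2 - 4 * a₂ * c₂ = J ^ 2 := by
  subst hx₁ hx₂ ha₂ hb₂ hc₂ hJ; ring
end

section
/- Suppose a₁ = q₂ + l₂q₁ ≠ 0, a₂ = q₁ + l₁q₂ ≠ 0, and J = 1 − l₁l₂ − a₁s₁ − a₂s₂ < 0. With x₁ = s₁ − l₁s₂ − q₁s₁s₂, x₂ = s₂ − l₂s₁ − q₂s₁s₂, b₁ = q₁x₂ − q₂x₁ + l₁l₂ − 1, b₂ = q₂x₁ − q₁x₂ + l₁l₂ − 1, c₁ = x₁ + l₁x₂, c₂ = x₂ + l₂x₁, and Δᵢ = bᵢ² − 4aᵢcᵢ, the first direct separating structure recovers the actual sources: (−b₁ + √Δ₁)/(2a₁) = s₁ and (−b₂ + √Δ₂)/(2a₂) = s₂ (where √ denotes the real square root). -/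
/-! The quadratic equation defining the first separating structure has the source `s₁` as a
root, with discriminant `(2 a₁ s₁ + b₁)² = J²`. Since `2 a₁ s₁ + b₁ = -J > 0`, the root with
`+√Δ₁` is the source. Exchanging the indices `1 ↔ 2` leaves the model and `J` unchanged, which
gives the second component. -/

theorem neg_add_sqrt_discrim_div_eq_of_quadratic_eq_zero {a b c s : ℝ} (ha : a ≠ 0)
    (hs : a * (s * s) + b * s + c = 0) (hpos : 0 ≤ 2 * a * s + b) :
    (-b + √(discrim a b c)) / (2 * a) = s := by
  rw [discrim_eq_sq_of_quadratic_eq_zero hs, Real.sqrt_sq hpos, div_eq_iff (by positivity)]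
  ring

theorem separating_root_eq_source (l₁ l₂ q₁ q₂ s₁ s₂ x₁ x₂ a₁ a₂ b₁ c₁ J : ℝ)
    (ha₁ : a₁ = q₂ + l₂ * q₁) (ha₁0 : a₁ ≠ 0) (ha₂ : a₂ = q₁ + l₁ * q₂)
    (hJ : J = 1 - l₁ * l₂ - a₁ * s₁ - a₂ * s₂) (hJ0 : J ≤ 0)
    (hx₁ : x₁ = s₁ - l₁ * s₂ - q₁ * s₁ * s₂)
    (hx₂ : x₂ = s₂ - l₂ * s₁ - q₂ * s₁ * s₂)
    (hb₁ : b₁ = q₁ * x₂ - q₂ * x₁ + l₁ * l₂ - 1)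
    (hc₁ : c₁ = x₁ + l₁ * x₂) :
    (-b₁ + √(b₁ ^ 2 - 4 * a₁ * c₁)) / (2 * a₁) = s₁ := by
  subst ha₁ ha₂ hx₁ hx₂ hb₁ hc₁
  have hroot : (q₂ + l₂ * q₁) * (s₁ * s₁) + (q₁ * (s₂ - l₂ * s₁ - q₂ * s₁ * s₂) -
      q₂ * (s₁ - l₁ * s₂ - q₁ * s₁ * s₂) + l₁ * l₂ - 1) * s₁ +
      ((s₁ - l₁ * s₂ - q₁ * s₁ * s₂) + l₁ * (s₂ - l₂ * s₁ - q₂ * s₁ * s₂)) = 0 := by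
    ring
  have hvertex : 2 * (q₂ + l₂ * q₁) * s₁ + (q₁ * (s₂ - l₂ * s₁ - q₂ * s₁ * s₂) -
      q₂ * (s₁ - l₁ * s₂ - q₁ * s₁ * s₂) + l₁ * l₂ - 1) = -J := by
    rw [hJ]; ring
  exact neg_add_sqrt_discrim_div_eq_of_quadratic_eq_zero ha₁0 hroot (by linarith)

/-- When `J < 0`, the first direct separating structure recovers the actual sources:
`(−b₁ + √Δ₁)/(2a₁) = s₁` and `(−b₂ + √Δ₂)/(2a₂) = s₂`. -/
theorem stmt_5 (l₁ l₂ q₁ q₂ s₁ s₂ x₁ x₂ a₁ a₂ b₁ b₂ c₁ c₂ Δ₁ Δ₂ J : ℝ)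
    (ha₁ : a₁ = q₂ + l₂ * q₁) (ha₁0 : a₁ ≠ 0)
    (ha₂ : a₂ = q₁ + l₁ * q₂) (ha₂0 : a₂ ≠ 0)
    (hJ : J = 1 - l₁ * l₂ - a₁ * s₁ - a₂ * s₂) (hJ0 : J < 0)
    (hx₁ : x₁ = s₁ - l₁ * s₂ - q₁ * s₁ * s₂)
    (hx₂ : x₂ = s₂ - l₂ * s₁ - q₂ * s₁ * s₂)
    (hb₁ : b₁ = q₁ * x₂ - q₂ * x₁ + l₁ * l₂ - 1)
    (hb₂ : b₂ = q₂ * x₁ - q₁ * x₂ + l₁ * l₂ - 1)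
    (hc₁ : c₁ = x₁ + l₁ * x₂)
    (hc₂ : c₂ = x₂ + l₂ * x₁)
    (hΔ₁ : Δ₁ = b₁ ^ 2 - 4 * a₁ * c₁)
    (hΔ₂ : Δ₂ = b₂ ^ 2 - 4 * a₂ * c₂) :
    (-b₁ + Real.sqrt Δ₁) / (2 * a₁) = s₁ ∧
    (-b₂ + Real.sqrt Δ₂) / (2 * a₂) = s₂ := by
  subst hΔ₁ hΔ₂
  constructor
  · exact separating_root_eq_source l₁ l₂ q₁ q₂ s₁ s₂ x₁ x₂ a₁ a₂ b₁ c₁ J ha₁ ha₁0 ha₂ hJ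
      hJ0.le hx₁ hx₂ hb₁ hc₁
  · exact separating_root_eq_source l₂ l₁ q₂ q₁ s₂ s₁ x₂ x₁ a₂ a₁ b₂ c₂ J ha₂ ha₂0 ha₁
      (by rw [hJ]; ring) hJ0.le (by rw [hx₂]; ring) (by rw [hx₁]; ring) (by rw [hb₂]; ring) hc₂
end

section
/- Suppose a₁ = q₂ + l₂q₁ ≠ 0, a₂ = q₁ + l₁q₂ ≠ 0, and J = 1 − l₁l₂ − a₁s₁ − a₂s₂ < 0. With x₁ = s₁ − l₁s₂ − q₁s₁s₂, x₂ = s₂ − l₂s₁ − q₂s₁s₂, b₁ = q₁x₂ − q₂x₁ + l₁l₂ − 1, b₂ = q₂x₁ − q₁x₂ + l₁l₂ − 1, c₁ = x₁ + l₁x₂, c₂ = x₂ + l₂x₁, and Δᵢ = bᵢ² − 4aᵢcᵢ, the second direct separating structure recovers the permuted solution: (−b₁ − √Δ₁)/(2a₁) = −(a₂/a₁)s₂ − (l₁l₂−1)/a₁ and (−b₂ − √Δ₂)/(2a₂) = −(a₁/a₂)s₁ − (l₁l₂−1)/a₂ (where √ denotes the real square root). -/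
/-- When `J < 0`, the second direct separating structure recovers the permuted solution. -/
theorem stmt_6 (l₁ l₂ q₁ q₂ s₁ s₂ x₁ x₂ a₁ a₂ b₁ b₂ c₁ c₂ Δ₁ Δ₂ J : ℝ)
    (ha₁ : a₁ = q₂ + l₂ * q₁) (ha₁0 : a₁ ≠ 0)
    (ha₂ : a₂ = q₁ + l₁ * q₂) (ha₂0 : a₂ ≠ 0)
    (hJ : J = 1 - l₁ * l₂ - a₁ * s₁ - a₂ * s₂) (hJ0 : J < 0)
    (hx₁ : x₁ = s₁ - l₁ * s₂ - q₁ * s₁ * s₂)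
    (hx₂ : x₂ = s₂ - l₂ * s₁ - q₂ * s₁ * s₂)
    (hb₁ : b₁ = q₁ * x₂ - q₂ * x₁ + l₁ * l₂ - 1)
    (hb₂ : b₂ = q₂ * x₁ - q₁ * x₂ + l₁ * l₂ - 1)
    (hc₁ : c₁ = x₁ + l₁ * x₂)
    (hc₂ : c₂ = x₂ + l₂ * x₁)
    (hΔ₁ : Δ₁ = b₁ ^ 2 - 4 * a₁ * c₁)
    (hΔ₂ : Δ₂ = b₂ ^ 2 - 4 * a₂ * c₂) :
    (-b₁ - Real.sqrt Δ₁) / (2 * a₁) = -(a₂ / a₁) * s₂ - (l₁ * l₂ - 1) / a₁ ∧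
    (-b₂ - Real.sqrt Δ₂) / (2 * a₂) = -(a₁ / a₂) * s₁ - (l₁ * l₂ - 1) / a₂ := by
  have h1 : Δ₁ = J ^ 2 := by subst hΔ₁ hb₁ hc₁ hx₁ hx₂ hJ ha₁ ha₂; ring
  have h2 : Δ₂ = J ^ 2 := by subst hΔ₂ hb₂ hc₂ hx₁ hx₂ hJ ha₁ ha₂; ring
  have hs1 : Real.sqrt Δ₁ = -J := by
    rw [h1, Real.sqrt_sq_eq_abs, abs_of_neg hJ0]
  have hs2 : Real.sqrt Δ₂ = -J := by
    rw [h2, Real.sqrt_sq_eq_abs, abs_of_neg hJ0]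
  constructor
  · rw [hs1]; field_simp
    subst hb₁ hx₁ hx₂ hJ ha₁ ha₂; ring
  · rw [hs2]; field_simp
    subst hb₂ hx₁ hx₂ hJ ha₁ ha₂; ring
end

section
/- Suppose a₁ = q₂ + l₂q₁ ≠ 0, a₂ = q₁ + l₁q₂ ≠ 0, and J = 1 − l₁l₂ − a₁s₁ − a₂s₂ > 0. With x₁ = s₁ − l₁s₂ − q₁s₁s₂, x₂ = s₂ − l₂s₁ − q₂s₁s₂, b₁ = q₁x₂ − q₂x₁ + l₁l₂ − 1, b₂ = q₂x₁ − q₁x₂ + l₁l₂ − 1, c₁ = x₁ + l₁x₂, c₂ = x₂ + l₂x₁, and Δᵢ = bᵢ² − 4aᵢcᵢ, the first direct separating structure yields the permuted solution, i.e. (−b₁ + √Δ₁)/(2a₁) = −(a₂/a₁)s₂ − (l₁l₂−1)/a₁ and (−b₂ + √Δ₂)/(2a₂) = −(a₁/a₂)s₁ − (l₁l₂−1)/a₂, while the second yields the actual sources, i.e. (−b₁ − √Δ₁)/(2a₁) = s₁ and (−b₂ − √Δ₂)/(2a₂) = s₂ (where √ denotes the real square root). -/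
/-!
Substituting the mixture, `b₁ = a₂ s₂ - a₁ s₁ + l₁ l₂ - 1` and `c₁ = s₁ (1 - l₁ l₂ - a₂ s₂)`, so
`a₁ z² + b₁ z + c₁` factors as `a₁ (z - s₁) (z - r)` with `r = (1 - l₁ l₂ - a₂ s₂) / a₁`.
Its discriminant is then `(a₁ (r - s₁))² = J²`, and since `J ≥ 0` the root taken with `+√Δ₁`
is `r` and the one taken with `-√Δ₁` is `s₁`. The second structure is the same computation with
the indices swapped.
-/

theorem quadratic_roots_of_eq_factor {a b c r r' : ℝ} (ha : a ≠ 0) (hb : b = -a * (r + r'))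
    (hc : c = a * r * r') (hr : 0 ≤ a * (r' - r)) :
    (-b + √(discrim a b c)) / (2 * a) = r' ∧ (-b - √(discrim a b c)) / (2 * a) = r := by
  have hdiscrim : discrim a b c = (a * (r' - r)) ^ 2 := by rw [discrim, hb, hc]; ring
  rw [hdiscrim, Real.sqrt_sq hr, hb]
  constructor <;> field_simp <;> ring

theorem linearQuadratic_separating_roots {l₁ l₂ q₁ q₂ s₁ s₂ x₁ x₂ a₁ a₂ b₁ c₁ : ℝ}
    (ha₁ : a₁ = q₂ + l₂ * q₁) (ha₁0 : a₁ ≠ 0) (ha₂ : a₂ = q₁ + l₁ * q₂)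
    (hJ : 0 ≤ 1 - l₁ * l₂ - a₁ * s₁ - a₂ * s₂)
    (hx₁ : x₁ = s₁ - l₁ * s₂ - q₁ * s₁ * s₂) (hx₂ : x₂ = s₂ - l₂ * s₁ - q₂ * s₁ * s₂)
    (hb₁ : b₁ = q₁ * x₂ - q₂ * x₁ + l₁ * l₂ - 1) (hc₁ : c₁ = x₁ + l₁ * x₂) :
    (-b₁ + √(b₁ ^ 2 - 4 * a₁ * c₁)) / (2 * a₁) = -(a₂ / a₁) * s₂ - (l₁ * l₂ - 1) / a₁ ∧
      (-b₁ - √(b₁ ^ 2 - 4 * a₁ * c₁)) / (2 * a₁) = s₁ := by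
  have har : a₁ * (-(a₂ / a₁) * s₂ - (l₁ * l₂ - 1) / a₁) = 1 - l₁ * l₂ - a₂ * s₂ := by
    field_simp; ring
  generalize -(a₂ / a₁) * s₂ - (l₁ * l₂ - 1) / a₁ = r at har ⊢
  have hb : b₁ = a₂ * s₂ - a₁ * s₁ + l₁ * l₂ - 1 := by rw [hb₁, hx₁, hx₂, ha₁, ha₂]; ring
  have hc : c₁ = s₁ * (1 - l₁ * l₂ - a₂ * s₂) := by rw [hc₁, hx₁, hx₂, ha₂]; ring
  refine quadratic_roots_of_eq_factor ha₁0 ?_ ?_ ?_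
  · linear_combination hb + har
  · linear_combination hc - s₁ * har
  · rw [mul_sub, har]; linarith

/-- When `J > 0`, the first direct separating structure yields the permuted solution
while the second yields the actual sources. -/
theorem stmt_7 (l₁ l₂ q₁ q₂ s₁ s₂ x₁ x₂ a₁ a₂ b₁ b₂ c₁ c₂ Δ₁ Δ₂ J : ℝ)
    (ha₁ : a₁ = q₂ + l₂ * q₁) (ha₁0 : a₁ ≠ 0)
    (ha₂ : a₂ = q₁ + l₁ * q₂) (ha₂0 : a₂ ≠ 0)
    (hJ : J = 1 - l₁ * l₂ - a₁ * s₁ - a₂ * s₂) (hJ0 : J > 0)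
    (hx₁ : x₁ = s₁ - l₁ * s₂ - q₁ * s₁ * s₂)
    (hx₂ : x₂ = s₂ - l₂ * s₁ - q₂ * s₁ * s₂)
    (hb₁ : b₁ = q₁ * x₂ - q₂ * x₁ + l₁ * l₂ - 1)
    (hb₂ : b₂ = q₂ * x₁ - q₁ * x₂ + l₁ * l₂ - 1)
    (hc₁ : c₁ = x₁ + l₁ * x₂)
    (hc₂ : c₂ = x₂ + l₂ * x₁)
    (hΔ₁ : Δ₁ = b₁ ^ 2 - 4 * a₁ * c₁)
    (hΔ₂ : Δ₂ = b₂ ^ 2 - 4 * a₂ * c₂) :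
    ((-b₁ + Real.sqrt Δ₁) / (2 * a₁) = -(a₂ / a₁) * s₂ - (l₁ * l₂ - 1) / a₁ ∧
     (-b₂ + Real.sqrt Δ₂) / (2 * a₂) = -(a₁ / a₂) * s₁ - (l₁ * l₂ - 1) / a₂) ∧
    ((-b₁ - Real.sqrt Δ₁) / (2 * a₁) = s₁ ∧
     (-b₂ - Real.sqrt Δ₂) / (2 * a₂) = s₂) := by
  subst hΔ₁ hΔ₂
  obtain ⟨hplus₁, hminus₁⟩ :=
    linearQuadratic_separating_roots ha₁ ha₁0 ha₂ (hJ ▸ hJ0).le hx₁ hx₂ hb₁ hc₁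
  obtain ⟨hplus₂, hminus₂⟩ := linearQuadratic_separating_roots
    (l₁ := l₂) (l₂ := l₁) (q₁ := q₂) (q₂ := q₁) (s₁ := s₂) (s₂ := s₁) (x₁ := x₂) (x₂ := x₁)
    (b₁ := b₂) ha₂ ha₂0 ha₁ (by linarith) (by rw [hx₂]; ring) (by rw [hx₁]; ring)
    (by rw [hb₂]; ring) hc₂
  rw [mul_comm l₂ l₁] at hplus₂
  exact ⟨⟨hplus₁, hplus₂⟩, hminus₁, hminus₂⟩
end

section
/- Suppose a₁ = q₂ + l₂q₁ ≠ 0 and a₂ = q₁ + l₁q₂ ≠ 0, and let x₁ = s₁ − l₁s₂ − q₁s₁s₂, x₂ = s₂ − l₂s₁ − q₂s₁s₂. Define the permuted solution σ₁ = −(a₂/a₁)s₂ − (l₁l₂−1)/a₁ and σ₂ = −(a₁/a₂)s₁ − (l₁l₂−1)/a₂. Then (σ₁,σ₂) produces the same observations: σ₁ − l₁σ₂ − q₁σ₁σ₂ = x₁ and σ₂ − l₂σ₁ − q₂σ₁σ₂ = x₂. -/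
/-!
Exchanging the indices 1 ↔ 2 preserves the mixture and the formulas for `a` and `σ`,
so only the first observation needs checking, and that is a field identity.
-/

section LinQuadMixture

variable {K : Type*} [Field K]

def linQuadMix (l q u v : K) : K := u - l * v - q * u * v

theorem linQuadMix_permuted (l₁ l₂ q₁ q₂ s₁ s₂ a₁ a₂ : K)
    (ha₁ : a₁ = q₂ + l₂ * q₁) (ha₁0 : a₁ ≠ 0) (ha₂ : a₂ = q₁ + l₁ * q₂) (ha₂0 : a₂ ≠ 0) :
    linQuadMix l₁ q₁ (-(a₂ / a₁) * s₂ - (l₁ * l₂ - 1) / a₁) (-(a₁ / a₂) * s₁ - (l₁ * l₂ - 1) / a₂) =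
      linQuadMix l₁ q₁ s₁ s₂ := by
  unfold linQuadMix
  field_simp
  subst ha₁ ha₂
  ring

end LinQuadMixture

/-- The permuted solution `(σ₁, σ₂)` produces the same observations as `(s₁, s₂)`. -/
theorem stmt_8 (l₁ l₂ q₁ q₂ s₁ s₂ x₁ x₂ a₁ a₂ σ₁ σ₂ : ℝ)
    (ha₁ : a₁ = q₂ + l₂ * q₁) (ha₁0 : a₁ ≠ 0)
    (ha₂ : a₂ = q₁ + l₁ * q₂) (ha₂0 : a₂ ≠ 0)
    (hx₁ : x₁ = s₁ - l₁ * s₂ - q₁ * s₁ * s₂)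
    (hx₂ : x₂ = s₂ - l₂ * s₁ - q₂ * s₁ * s₂)
    (hσ₁ : σ₁ = -(a₂ / a₁) * s₂ - (l₁ * l₂ - 1) / a₁)
    (hσ₂ : σ₂ = -(a₁ / a₂) * s₁ - (l₁ * l₂ - 1) / a₂) :
    σ₁ - l₁ * σ₂ - q₁ * σ₁ * σ₂ = x₁ ∧
    σ₂ - l₂ * σ₁ - q₂ * σ₁ * σ₂ = x₂ := by
  have first := linQuadMix_permuted l₁ l₂ q₁ q₂ s₁ s₂ a₁ a₂ ha₁ ha₁0 ha₂ ha₂0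
  have second := linQuadMix_permuted l₂ l₁ q₂ q₁ s₂ s₁ a₂ a₁ ha₂ ha₂0 ha₁ ha₁0
  rw [mul_comm l₂ l₁, ← hσ₁, ← hσ₂] at second
  rw [← hσ₁, ← hσ₂] at first
  unfold linQuadMix at first second
  exact ⟨by rw [first, hx₁], by linear_combination second - hx₂⟩
end

section
/- Suppose a₁ = q₂ + l₂q₁ ≠ 0 and a₂ = q₁ + l₁q₂ ≠ 0. Define the permuted solution σ₁ = −(a₂/a₁)s₂ − (l₁l₂−1)/a₁ and σ₂ = −(a₁/a₂)s₁ − (l₁l₂−1)/a₂. Then the Jacobian of the mixture evaluated at the permuted solution is the negative of the Jacobian at the original sources: 1 − l₁l₂ − a₁σ₁ − a₂σ₂ = −(1 − l₁l₂ − a₁s₁ − a₂s₂). -/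
/-- The Jacobian of the mixture evaluated at the permuted solution is the negative
of the Jacobian at the original sources. -/
theorem stmt_9 (l₁ l₂ q₁ q₂ s₁ s₂ a₁ a₂ σ₁ σ₂ : ℝ)
    (ha₁ : a₁ = q₂ + l₂ * q₁) (ha₁0 : a₁ ≠ 0)
    (ha₂ : a₂ = q₁ + l₁ * q₂) (ha₂0 : a₂ ≠ 0)
    (hσ₁ : σ₁ = -(a₂ / a₁) * s₂ - (l₁ * l₂ - 1) / a₁)
    (hσ₂ : σ₂ = -(a₁ / a₂) * s₁ - (l₁ * l₂ - 1) / a₂) :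
    1 - l₁ * l₂ - a₁ * σ₁ - a₂ * σ₂ = -(1 - l₁ * l₂ - a₁ * s₁ - a₂ * s₂) := by
  subst hσ₁ hσ₂
  field_simp
  ring
end
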